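/- Connectivity of the frame set: for R ≥ 4, the set Edges = {x ∈ [−R,R]^d ∩ Z^d : at least two coordinates of x lie in {−R,−R+1,−R+2,R−2,R−1,R}} is a connected subgraph of Z^d (with nearest-neighbor edges); moreover for any two ℓ^1-adjacent centers x'₁, x'₂ ∈ (2R+1)Z^d, the union (x'₁ + Edges) ∪ (x'₂ + Edges) is connected. -/

import Mathlib

/-- ℓ¹ norm on `ℤ^d`. -/
def lone {d : ℕ} (x : Fin d → ℤ) : ℕ := ∑ i, (x i).natAbs

/-- `S` is a connected subgraph of `ℤ^d` with nearest-neighbor edges. -/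
def ConnIn {d : ℕ} (S : Set (Fin d → ℤ)) : Prop :=
  ∀ a ∈ S, ∀ b ∈ S, ∃ (m : ℕ) (f : ℕ → Fin d → ℤ),
    f 0 = a ∧ f m = b ∧ (∀ i ≤ m, f i ∈ S) ∧ ∀ i < m, lone (f (i + 1) - f i) = 1

/-- The thickened edge frame of the cube `[−R,R]^d`: points with at least two coordinates in
`{−R, −R+1, −R+2, R−2, R−1, R}`. -/
def edgesSet (d R : ℕ) : Set (Fin d → ℤ) :=
  {x | (∀ i, x i ∈ Finset.Icc (-(R : ℤ)) R) ∧
    2 ≤ (Finset.univ.filter fun i =>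
      x i ∈ ({-(R : ℤ), -(R : ℤ) + 1, -(R : ℤ) + 2,
        (R : ℤ) - 2, (R : ℤ) - 1, (R : ℤ)} : Finset ℤ)).card}

/-!
A point of the frame has two coordinates `i ≠ j` in the band `{-R, …, -R+2, R-2, …, R}`;
as long as these two stay fixed, every other coordinate can be slid freely through `[-R, R]`
without leaving the frame. Sliding all other coordinates to `R`, and then using a third
coordinate as a new band coordinate to slide `i` and `j` as well, connects every frame point
to the corner `(R, …, R)`. For two adjacent cubes, the corner
`(R, …, R)` of the first frame and the corner `(R, …, -R, …, R)` of the second one are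
nearest neighbours across the common face.
-/

open Function Relation

section Lattice

variable {d : ℕ}

lemma lone_neg (x : Fin d → ℤ) : lone (-x) = lone x := by
  simp [lone]

lemma lone_sub_comm (x y : Fin d → ℤ) : lone (x - y) = lone (y - x) := by
  rw [← neg_sub, lone_neg]

lemma lone_single (k : Fin d) (c : ℤ) : lone (Pi.single k c) = c.natAbs := by
  rw [lone, Finset.sum_eq_single k (fun m _ hm => by simp [hm]) (by simp)]
  simp

lemma update_sub_update (x : Fin d → ℤ) (k : Fin d) (s t : ℤ) :
    update x k s - update x k t = Pi.single k (s - t) := by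
  ext m
  by_cases hm : m = k
  · subst hm; simp
  · simp [hm]

lemma exists_eq_single_of_dvd_of_lone_eq {L : ℕ} (hL : 0 < L) {v : Fin d → ℤ}
    (hdvd : ∀ i, (L : ℤ) ∣ v i) (hv : lone v = L) :
    ∃ k, v = Pi.single k (L : ℤ) ∨ v = -Pi.single k (L : ℤ) := by
  obtain ⟨k, -, hk⟩ : ∃ k ∈ Finset.univ, (v k).natAbs ≠ 0 :=
    Finset.exists_ne_zero_of_sum_ne_zero (by rw [← lone, hv]; omega)
  have hLk : L ≤ (v k).natAbs :=
    Nat.le_of_dvd (Nat.pos_of_ne_zero hk) (by simpa using Int.natAbs_dvd_natAbs.2 (hdvd k))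
  have hzero : ∀ m ≠ k, v m = 0 := by
    intro m hm
    have : (v m).natAbs + (v k).natAbs ≤ lone v :=
      calc (v m).natAbs + (v k).natAbs = ∑ i ∈ {m, k}, (v i).natAbs :=
            (Finset.sum_pair (f := fun i => (v i).natAbs) hm).symm
        _ ≤ lone v := Finset.sum_le_sum_of_subset (Finset.subset_univ _)
    omega
  have hvk : (v k).natAbs = L := by
    rw [← hv, lone, Finset.sum_eq_single k (fun m _ hm => by simp [hzero m hm]) (by simp)]
  have hv' : v = Pi.single k (v k) := by
    ext m
    by_cases hm : m = k
    · subst hm; simp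
    · simp [hm, hzero m hm]
  refine ⟨k, ?_⟩
  rcases Int.natAbs_eq_iff.1 hvk with h | h
  · exact Or.inl (hv'.trans (by rw [h]))
  · exact Or.inr (hv'.trans (by rw [h, Pi.single_neg]))

def AdjIn (S : Set (Fin d → ℤ)) (a b : Fin d → ℤ) : Prop :=
  a ∈ S ∧ b ∈ S ∧ lone (b - a) = 1

instance (S : Set (Fin d → ℤ)) : Std.Symm (AdjIn S) :=
  ⟨fun _ _ h => ⟨h.2.1, h.1, by rw [lone_sub_comm, h.2.2]⟩⟩

lemma AdjIn.mono {S T : Set (Fin d → ℤ)} (hST : S ⊆ T) {a b : Fin d → ℤ}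
    (h : AdjIn S a b) : AdjIn T a b :=
  ⟨hST h.1, hST h.2.1, h.2.2⟩

lemma connIn_iff {S : Set (Fin d → ℤ)} :
    ConnIn S ↔ ∀ a ∈ S, ∀ b ∈ S, ReflTransGen (AdjIn S) a b := by
  refine forall₂_congr fun a ha => forall₂_congr fun b hb => ⟨?_, fun h => ?_⟩
  · rintro ⟨m, f, h0, hm, hS, hstep⟩
    have : ∀ i ≤ m, ReflTransGen (AdjIn S) a (f i) := by
      intro i hi
      induction i with
      | zero => rw [h0]
      | succ i ih => exact (ih (by omega)).tail ⟨hS i (by omega), hS _ hi, hstep i hi⟩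
    exact hm ▸ this m le_rfl
  · clear hb
    induction h with
    | refl => exact ⟨0, fun _ => a, rfl, rfl, fun _ _ => ha, by simp⟩
    | @tail b c _ hbc ih =>
      obtain ⟨m, f, h0, hm, hS, hstep⟩ := ih
      refine ⟨m + 1, fun i => if i ≤ m then f i else c, by simpa using h0, by simp,
        fun i hi => ?_, fun i hi => ?_⟩
      · by_cases him : i ≤ m
        · simpa [him] using hS i him
        · simpa [him] using hbc.2.1
      · by_cases him : i + 1 ≤ m
        · simpa [him, show i ≤ m by omega] using hstep i him
        · obtain rfl : i = m := by omega
          simpa [hm] using hbc.2.2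

lemma ConnIn.union {S T : Set (Fin d → ℤ)} (hS : ConnIn S) (hT : ConnIn T) {a b : Fin d → ℤ}
    (ha : a ∈ S) (hb : b ∈ T) (hab : lone (b - a) = 1) : ConnIn (S ∪ T) := by
  rw [connIn_iff] at *
  have to_a : ∀ u ∈ S ∪ T, ReflTransGen (AdjIn (S ∪ T)) u a := by
    rintro u (hu | hu)
    · exact ReflTransGen.mono (fun _ _ => AdjIn.mono Set.subset_union_left) _ _ (hS u hu a ha)
    · exact (ReflTransGen.mono (fun _ _ => AdjIn.mono Set.subset_union_right) _ _
        (hT u hu b hb)).tail (symm ⟨Or.inl ha, Or.inr hb, hab⟩)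
  exact fun u hu w hw => (to_a u hu).trans (symm (to_a w hw))

lemma ConnIn.image_add {S : Set (Fin d → ℤ)} (hS : ConnIn S) (v : Fin d → ℤ) :
    ConnIn ((v + ·) '' S) := by
  rw [connIn_iff] at *
  rintro _ ⟨a, ha, rfl⟩ _ ⟨b, hb, rfl⟩
  exact (hS a ha b hb).lift (v + ·) fun x y h =>
    ⟨Set.mem_image_of_mem _ h.1, Set.mem_image_of_mem _ h.2.1, by simpa using h.2.2⟩

lemma reflTransGen_update_of_le {S : Set (Fin d → ℤ)} (x : Fin d → ℤ) (k : Fin d) {a b : ℤ}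
    (hab : a ≤ b) (h : ∀ s ∈ Set.Icc a b, update x k s ∈ S) :
    ReflTransGen (AdjIn S) (update x k a) (update x k b) := by
  induction b, hab using Int.leInduction with
  | base => rfl
  | succ b hab ih =>
    exact (ih fun s hs => h s ⟨hs.1, by linarith [hs.2]⟩).tail
      ⟨h b ⟨hab, by omega⟩, h _ ⟨by omega, le_rfl⟩, by simp [update_sub_update, lone_single]⟩

lemma reflTransGen_update {S : Set (Fin d → ℤ)} {x : Fin d → ℤ} {k : Fin d} {t : ℤ}
    (h : ∀ s ∈ Set.uIcc (x k) t, update x k s ∈ S) :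
    ReflTransGen (AdjIn S) x (update x k t) := by
  rcases le_total (x k) t with hle | hle
  · simpa using reflTransGen_update_of_le x k hle fun s hs => h s (Set.Icc_subset_uIcc hs)
  · simpa using
      symm (reflTransGen_update_of_le x k hle fun s hs => h s (Set.Icc_subset_uIcc' hs))

end Lattice

section Frame

variable {d R : ℕ}

def band (R : ℕ) : Finset ℤ :=
  {-(R : ℤ), -(R : ℤ) + 1, -(R : ℤ) + 2, (R : ℤ) - 2, (R : ℤ) - 1, (R : ℤ)}

lemma mem_edgesSet_iff {x : Fin d → ℤ} :
    x ∈ edgesSet d R ↔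
      (∀ m, x m ∈ Set.Icc (-(R : ℤ)) R) ∧ ∃ i j, i ≠ j ∧ x i ∈ band R ∧ x j ∈ band R := by
  change (_ ∧ 1 < _) ↔ _
  simp only [band, Finset.one_lt_card_iff, Finset.mem_filter, Finset.mem_univ, true_and,
    Finset.mem_Icc, Set.mem_Icc]
  constructor
  · rintro ⟨hc, i, j, hi, hj, hij⟩; exact ⟨hc, i, j, hij, hi, hj⟩
  · rintro ⟨hc, i, j, hij, hi, hj⟩; exact ⟨hc, i, j, hi, hj, hij⟩

lemma mem_edgesSet_of_forall_eq_or (hd : 2 ≤ d) {x : Fin d → ℤ}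
    (hx : ∀ m, x m = R ∨ x m = -R) : x ∈ edgesSet d R := by
  have hband : ∀ m, x m ∈ band R := fun m => by rcases hx m with h | h <;> simp [h, band]
  refine mem_edgesSet_iff.2 ⟨fun m => ?_, ⟨0, by omega⟩, ⟨1, by omega⟩, by simp, hband _, hband _⟩
  rcases hx m with h | h <;> rw [h] <;> constructor <;> omega

lemma reflTransGen_of_eqOn_pair {x y : Fin d → ℤ} (hx : ∀ m, x m ∈ Set.Icc (-(R : ℤ)) R)
    (hy : ∀ m, y m ∈ Set.Icc (-(R : ℤ)) R) {i j : Fin d} (hij : i ≠ j)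
    (hi : x i ∈ band R) (hj : x j ∈ band R) (hyi : y i = x i) (hyj : y j = x j) :
    ReflTransGen (AdjIn (edgesSet d R)) x y := by
  have hT : ∀ T : Finset (Fin d), i ∉ T → j ∉ T →
      ReflTransGen (AdjIn (edgesSet d R)) x (T.piecewise y x) := by
    intro T
    induction T using Finset.induction_on with
    | empty => exact fun _ _ => by rw [Finset.piecewise_empty]
    | insert k T _ ih =>
      intro hiT hjT
      rw [Finset.mem_insert, not_or] at hiT hjT
      rw [Finset.piecewise_insert]
      have hz : ∀ m, T.piecewise y x m ∈ Set.Icc (-(R : ℤ)) R := fun m => by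
        by_cases hm : m ∈ T <;> simp [hm, hx m, hy m]
      refine (ih hiT.2 hjT.2).trans
        (reflTransGen_update fun s hs => mem_edgesSet_iff.2 ⟨?_, i, j, hij, ?_, ?_⟩)
      · exact (forall_update_iff _ fun _ v => v ∈ Set.Icc (-(R : ℤ)) R).2
          ⟨Set.uIcc_subset_Icc (hz k) (hy k) hs, fun m _ => hz m⟩
      · rwa [update_of_ne hiT.1, Finset.piecewise_eq_of_notMem _ _ _ hiT.2]
      · rwa [update_of_ne hjT.1, Finset.piecewise_eq_of_notMem _ _ _ hjT.2]
  convert hT {i, j}ᶜ (by simp) (by simp) using 1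
  ext m
  by_cases hm : m = i ∨ m = j
  · rcases hm with rfl | rfl <;> simp [hyi, hyj]
  · rw [not_or] at hm
    simp [Finset.piecewise, hm]

lemma reflTransGen_const_of_mem_edgesSet (hd : 3 ≤ d) {x : Fin d → ℤ} (hx : x ∈ edgesSet d R) :
    ReflTransGen (AdjIn (edgesSet d R)) x (fun _ => (R : ℤ)) := by
  obtain ⟨hxc, i, j, hij, hi, hj⟩ := mem_edgesSet_iff.1 hx
  obtain ⟨k, -, hk⟩ := Finset.exists_mem_notMem_of_card_lt_card
    (s := {i, j}) (t := Finset.univ) (by simpa using Finset.card_le_two.trans_lt hd)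
  rw [Finset.mem_insert, Finset.mem_singleton, not_or] at hk
  set c : Fin d → ℤ := fun _ => R
  have hRc : (R : ℤ) ∈ Set.Icc (-(R : ℤ)) R := ⟨by omega, le_rfl⟩
  have hRb : (R : ℤ) ∈ band R := by simp [band]
  have hcube : ∀ m, c m ∈ Set.Icc (-(R : ℤ)) R := fun _ => hRc
  have hupd : ∀ {y : Fin d → ℤ} {l t}, (∀ m, y m ∈ Set.Icc (-(R : ℤ)) R) →
      t ∈ Set.Icc (-(R : ℤ)) R → ∀ m, update y l t m ∈ Set.Icc (-(R : ℤ)) R :=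
    fun hy ht => (forall_update_iff _ fun _ v => v ∈ Set.Icc (-(R : ℤ)) R).2
      ⟨ht, fun m _ => hy m⟩
  -- `x → (R, …, x i, …, x j, …, R) → (R, …, x j, …, R) → c`: consecutive points agree on the
  -- band coordinates `{i, j}`, `{j, k}` and `{i, k}` respectively.
  have h₁ : ReflTransGen (AdjIn (edgesSet d R)) x (update (update c i (x i)) j (x j)) :=
    reflTransGen_of_eqOn_pair hxc (hupd (hupd hcube (hxc i)) (hxc j)) hij hi hj
      (by simp [update_of_ne hij]) (by simp)
  have h₂ : ReflTransGen (AdjIn (edgesSet d R)) (update (update c i (x i)) j (x j))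
      (update c j (x j)) :=
    reflTransGen_of_eqOn_pair (hupd (hupd hcube (hxc i)) (hxc j)) (hupd hcube (hxc j))
      (Ne.symm hk.2) (by simpa using hj) (by simp [update_of_ne hk.1, update_of_ne hk.2, c, hRb])
      (by simp) (by simp [update_of_ne hk.1, update_of_ne hk.2, c])
  have h₃ : ReflTransGen (AdjIn (edgesSet d R)) (update c j (x j)) c :=
    reflTransGen_of_eqOn_pair (hupd hcube (hxc j)) hcube (Ne.symm hk.1)
      (by simp [update_of_ne hij, c, hRb]) (by simp [update_of_ne hk.2, c, hRb])
      (by simp [update_of_ne hij, c]) (by simp [update_of_ne hk.2, c])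
  exact h₁.trans (h₂.trans h₃)

theorem connIn_edgesSet (hd : 3 ≤ d) : ConnIn (edgesSet d R) :=
  connIn_iff.2 fun _ ha _ hb =>
    (reflTransGen_const_of_mem_edgesSet hd ha).trans
      (symm (reflTransGen_const_of_mem_edgesSet hd hb))

lemma connIn_edgesSet_union_add_single (hd : 3 ≤ d) (x : Fin d → ℤ) (k : Fin d) :
    ConnIn (((x + ·) '' edgesSet d R) ∪
      ((x + Pi.single k ((2 * R + 1 : ℕ) : ℤ) + ·) '' edgesSet d R)) := by
  set c : Fin d → ℤ := fun _ => R
  have hc : c ∈ edgesSet d R := mem_edgesSet_of_forall_eq_or (by omega) fun _ => Or.inl rfl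
  have hc' : update c k (-R) ∈ edgesSet d R :=
    mem_edgesSet_of_forall_eq_or (by omega) fun m => by
      by_cases hm : m = k
      · subst hm; simp
      · simp [hm, c]
  refine ((connIn_edgesSet hd).image_add x).union ((connIn_edgesSet hd).image_add _)
    (Set.mem_image_of_mem _ hc) (Set.mem_image_of_mem _ hc') ?_
  have hstep : x + Pi.single k ((2 * R + 1 : ℕ) : ℤ) + update c k (-R) - (x + c) =
      Pi.single k 1 := by
    ext m
    by_cases hm : m = k
    · subst hm
      simp only [Pi.sub_apply, Pi.add_apply, Pi.single_eq_same, update_self, c]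
      push_cast
      ring
    · simp [hm, c]
  rw [hstep, lone_single]
  rfl

end Frame

theorem edges_connected_general (d R : ℕ) (hd : 3 ≤ d) :
    ConnIn (edgesSet d R) ∧
      ∀ x₁ x₂ : Fin d → ℤ,
        (∀ i, ((2 * R + 1 : ℕ) : ℤ) ∣ x₁ i) → (∀ i, ((2 * R + 1 : ℕ) : ℤ) ∣ x₂ i) →
        lone (x₁ - x₂) = 2 * R + 1 →
        ConnIn (((x₁ + ·) '' edgesSet d R) ∪ ((x₂ + ·) '' edgesSet d R)) := by
  refine ⟨connIn_edgesSet hd, fun x₁ x₂ h₁ h₂ hl => ?_⟩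
  obtain ⟨k, h | h⟩ := exists_eq_single_of_dvd_of_lone_eq (by omega)
    (fun i => by simpa using dvd_sub (h₁ i) (h₂ i)) hl
  · rw [sub_eq_iff_eq_add'.1 h, Set.union_comm]
    exact connIn_edgesSet_union_add_single hd x₂ k
  · rw [← neg_sub, neg_inj] at h
    rw [sub_eq_iff_eq_add'.1 h]
    exact connIn_edgesSet_union_add_single hd x₁ k

/-- For `R ≥ 4` the edge frame is connected; moreover for any two ℓ¹-adjacent centers
`x₁, x₂ ∈ (2R+1)ℤ^d` the union of the two translated frames is connected. -/
theorem edges_connected (d R : ℕ) (hd : 3 ≤ d) (hR : 4 ≤ R) :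
    ConnIn (edgesSet d R) ∧
      ∀ x₁ x₂ : Fin d → ℤ,
        (∀ i, ((2 * R + 1 : ℕ) : ℤ) ∣ x₁ i) → (∀ i, ((2 * R + 1 : ℕ) : ℤ) ∣ x₂ i) →
        lone (x₁ - x₂) = 2 * R + 1 →
        ConnIn (((x₁ + ·) '' edgesSet d R) ∪ ((x₂ + ·) '' edgesSet d R)) :=
  edges_connected_general d R hd
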